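/- arXiv:1705.02202 — 3 statements merged into one kernel-verified Lean document; each statement's English description precedes it below -/
import Mathlib

section
/- For all δ ∈ [0, 1], e^{-δ} / (1-δ)^{1-δ} ≤ exp(-δ²/3), where (1-δ)^{1-δ} is interpreted as 1 when δ = 1. -/
lemma aux13 (u : ℝ) (hu : 0 < u) (hu1 : u ≤ 1) :
    (u - 1) * (u + 2) / 3 ≤ u * Real.log u := by
  set t : ℝ := u ^ ((1:ℝ)/3) with ht
  have ht0 : 0 < t := Real.rpow_pos_of_pos hu _
  have ht1 : t ≤ 1 := Real.rpow_le_one hu.le hu1 (by norm_num)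
  have htu : t ^ 3 = u := by
    rw [ht, ← Real.rpow_natCast (u ^ ((1:ℝ)/3)) 3, ← Real.rpow_mul hu.le]
    norm_num
  have hlog : Real.log u = 3 * Real.log t := by
    rw [← htu, Real.log_pow]; push_cast; ring
  have hlt : 1 - 1/t ≤ Real.log t := by
    have := Real.log_le_sub_one_of_pos (show (0:ℝ) < 1/t by positivity)
    rw [Real.log_div one_ne_zero ht0.ne', Real.log_one] at this
    linarith
  have key : 3 * t^3 - 3 * t^2 ≤ t^3 * (3 * Real.log t) := by
    have h1 : t^3 * (3 * (1 - 1/t)) ≤ t^3 * (3 * Real.log t) := by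
      apply mul_le_mul_of_nonneg_left (by linarith) (by positivity)
    have h2 : t^3 * (3 * (1 - 1/t)) = 3 * t^3 - 3 * t^2 := by
      field_simp
    linarith
  have poly : (t^3 - 1) * (t^3 + 2) / 3 ≤ 3 * t^3 - 3 * t^2 := by
    nlinarith [sq_nonneg (t - 1), sq_nonneg t, mul_nonneg (mul_nonneg ht0.le ht0.le) ht0.le,
      mul_nonneg (sq_nonneg (t-1)) ht0.le, mul_nonneg (sq_nonneg (t-1)) (sq_nonneg t),
      mul_nonneg (mul_nonneg (sq_nonneg (t-1)) ht0.le) ht0.le,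
      mul_nonneg (sq_nonneg (t-1)) (mul_nonneg (sq_nonneg t) (sub_nonneg.mpr ht1))]
  rw [hlog, ← htu]
  calc (t^3 - 1) * (t^3 + 2) / 3 ≤ 3 * t^3 - 3 * t^2 := poly
    _ ≤ t^3 * (3 * Real.log t) := key

theorem stmt13 (δ : ℝ) (hδ : δ ∈ Set.Icc (0 : ℝ) 1) :
    Real.exp (-δ) / (1 - δ) ^ (1 - δ) ≤ Real.exp (-δ ^ 2 / 3) := by
  obtain ⟨h0, h1⟩ := hδ
  rcases eq_or_lt_of_le h1 with h | h
  · subst h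
    norm_num [Real.rpow_zero]
  · have hu : 0 < 1 - δ := by linarith
    have hrw : (1 - δ) ^ (1 - δ) = Real.exp (Real.log (1 - δ) * (1 - δ)) :=
      Real.rpow_def_of_pos hu _
    rw [hrw, ← Real.exp_sub, Real.exp_le_exp]
    have := aux13 (1 - δ) hu (by linarith)
    nlinarith [this]
end

section
/- In the setting of the previous context, let x ∈ ℝ^n be in span(U_k) and satisfy ‖AᵀA x − x‖₂ ≤ ε‖x‖₂ for some ε ≥ 0, and set x̃ = A x. Then x̃ᵀ L̃ x̃ ≤ g(λ_k)‖x‖₂² + ε² g(λ_n)‖x‖₂², where L̃ = A g(L) Aᵀ. -/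
open Matrix Finset

/-- Size of group ℓ. -/
noncomputable def gsize {n N : ℕ} (grp : Fin n → Fin N) (ℓ : Fin N) : ℕ :=
  (Finset.univ.filter fun j => grp j = ℓ).card

/-- Group-averaging matrix: row ℓ equals |N_ℓ|^{-1/2} times the indicator of group ℓ. -/
noncomputable def avg {n N : ℕ} (grp : Fin n → Fin N) : Matrix (Fin N) (Fin n) ℝ :=
  fun ℓ j => if grp j = ℓ then (Real.sqrt (gsize grp ℓ))⁻¹ else 0

/-- Euclidean (ℓ2) norm of a vector. -/
noncomputable def vnorm {ι : Type*} [Fintype ι] (v : ι → ℝ) : ℝ :=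
  Real.sqrt (∑ i, v i ^ 2)

lemma avg_mul_t {n N : ℕ} (grp : Fin n → Fin N) (hsurj : Function.Surjective grp) :
    avg grp * (avg grp)ᵀ = 1 := by
  ext ℓ ℓ'
  simp only [Matrix.mul_apply, avg, transpose_apply, Matrix.one_apply, ite_mul, zero_mul,
    mul_ite, mul_zero]
  by_cases h : ℓ' = ℓ
  · subst h
    simp only [if_pos rfl, if_true, ite_self]
    have hcard : 0 < (gsize grp ℓ' : ℝ) := by
      have : (Finset.univ.filter fun j => grp j = ℓ').Nonempty := by
        obtain ⟨j, hj⟩ := hsurj ℓ'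
        exact ⟨j, by simp [hj]⟩
      have := Finset.card_pos.mpr this
      exact_mod_cast this
    have hs : Real.sqrt (gsize grp ℓ') * Real.sqrt (gsize grp ℓ') = (gsize grp ℓ' : ℝ) :=
      Real.mul_self_sqrt (le_of_lt hcard)
    rw [← Finset.sum_filter,
      Finset.sum_congr rfl (fun a ha => if_pos (Finset.mem_filter.mp ha).2),
      Finset.sum_const, ← gsize, nsmul_eq_mul, ← mul_inv, hs]
    field_simp
  · rw [if_neg (Ne.symm h)]
    refine Finset.sum_eq_zero fun j _ => ?_
    by_cases h1 : grp j = ℓ <;> by_cases h2 : grp j = ℓ' <;> simp [h1, h2]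
    all_goals intro hh; simp_all

lemma dot_self_nonneg {ι : Type*} [Fintype ι] (v : ι → ℝ) : 0 ≤ v ⬝ᵥ v :=
  Finset.sum_nonneg fun _ _ => mul_self_nonneg _

lemma vnorm_sq {ι : Type*} [Fintype ι] (v : ι → ℝ) : vnorm v ^ 2 = v ⬝ᵥ v := by
  rw [vnorm, Real.sq_sqrt (Finset.sum_nonneg fun i _ => sq_nonneg _)]
  exact Finset.sum_congr rfl fun i _ => by ring

theorem stmt17 {n N k : ℕ} (hk0 : 0 < k) (hkn : k ≤ n)
    (U : Matrix (Fin n) (Fin n) ℝ) (hU : Uᵀ * U = 1)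
    (lam : Fin n → ℝ) (hlam0 : ∀ i, 0 ≤ lam i) (hmono : Monotone lam)
    (L : Matrix (Fin n) (Fin n) ℝ) (hL : L = U * Matrix.diagonal lam * Uᵀ)
    (g : Polynomial ℝ) (hg0 : ∀ t : ℝ, 0 ≤ g.eval t)
    (hgmono : ∀ x y : ℝ, x ≤ y → g.eval x ≤ g.eval y)
    (grp : Fin n → Fin N) (hsurj : Function.Surjective grp)
    (gL : Matrix (Fin n) (Fin n) ℝ)
    (hgL : gL = U * Matrix.diagonal (fun i => g.eval (lam i)) * Uᵀ)
    (Lt : Matrix (Fin N) (Fin N) ℝ) (hLt : Lt = avg grp * gL * (avg grp)ᵀ)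
    (Pk : Matrix (Fin n) (Fin n) ℝ)
    (hPk : ∀ a b, Pk a b
      = ∑ i ∈ Finset.univ.filter fun i : Fin n => (i : ℕ) < k, U a i * U b i)
    (x : Fin n → ℝ) (hx : Pk.mulVec x = x)
    (ε : ℝ) (hε : 0 ≤ ε)
    (hxc : vnorm (((avg grp)ᵀ * avg grp).mulVec x - x) ≤ ε * vnorm x) :
    (avg grp).mulVec x ⬝ᵥ Lt.mulVec ((avg grp).mulVec x)
      ≤ g.eval (lam ⟨k - 1, lt_of_lt_of_le (Nat.sub_lt hk0 one_pos) hkn⟩) * (x ⬝ᵥ x)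
        + ε ^ 2 * g.eval (lam ⟨n - 1, Nat.sub_lt (lt_of_lt_of_le hk0 hkn) one_pos⟩)
          * (x ⬝ᵥ x) := by
  classical
  set A := avg grp with hA
  have hAAt : A * Aᵀ = 1 := avg_mul_t grp hsurj
  have hUUt : U * Uᵀ = 1 := mul_eq_one_comm.mp hU
  set P : Matrix (Fin n) (Fin n) ℝ := Aᵀ * A with hPdef
  have hdot : ∀ {m p : ℕ} (M : Matrix (Fin m) (Fin p) ℝ) (a : Fin p → ℝ) (b : Fin m → ℝ),
      M.mulVec a ⬝ᵥ b = a ⬝ᵥ Mᵀ.mulVec b := by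
    intro m p M a b
    rw [dotProduct_comm, Matrix.dotProduct_mulVec, ← Matrix.mulVec_transpose, dotProduct_comm]
  have hUn : ∀ v w : Fin n → ℝ, Uᵀ.mulVec v ⬝ᵥ Uᵀ.mulVec w = v ⬝ᵥ w := by
    intro v w
    rw [hdot, transpose_transpose, Matrix.mulVec_mulVec, hUUt, Matrix.one_mulVec]
  have hPsymm : Pᵀ = P := by rw [hPdef, Matrix.transpose_mul, Matrix.transpose_transpose]
  have hPP : P * P = P := by
    rw [hPdef, Matrix.mul_assoc, ← Matrix.mul_assoc A Aᵀ A, hAAt, Matrix.one_mul]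
  set y : Fin n → ℝ := Uᵀ.mulVec (P.mulVec x) with hy
  set d : Fin n → ℝ := Uᵀ.mulVec x with hd
  set e : Fin n → ℝ := Uᵀ.mulVec (P.mulVec x - x) with he
  -- contraction
  have hPxx : P.mulVec x ⬝ᵥ P.mulVec x = x ⬝ᵥ P.mulVec x := by
    rw [hdot, hPsymm, Matrix.mulVec_mulVec, hPP]
  have hcontr : P.mulVec x ⬝ᵥ P.mulVec x ≤ x ⬝ᵥ x := by
    have h0 : 0 ≤ (x - P.mulVec x) ⬝ᵥ (x - P.mulVec x) := dot_self_nonneg _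
    have hcomm : x ⬝ᵥ P.mulVec x = P.mulVec x ⬝ᵥ x := dotProduct_comm _ _
    simp only [sub_dotProduct, dotProduct_sub] at h0
    linarith
  -- error bound
  have hex : (P.mulVec x - x) ⬝ᵥ (P.mulVec x - x) ≤ ε ^ 2 * (x ⬝ᵥ x) := by
    have h2 : vnorm (P.mulVec x - x) ^ 2 ≤ (ε * vnorm x) ^ 2 := by
      have hn : 0 ≤ vnorm (P.mulVec x - x) := Real.sqrt_nonneg _
      exact pow_le_pow_left₀ hn hxc 2
    rw [vnorm_sq, mul_pow, vnorm_sq] at h2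
    exact h2
  -- support of d
  have hPk' : Pk = U * Matrix.diagonal (fun i : Fin n => if (i : ℕ) < k then (1:ℝ) else 0) * Uᵀ := by
    ext a b
    rw [hPk, Matrix.mul_apply, Finset.sum_filter]
    refine Finset.sum_congr rfl fun j _ => ?_
    rw [Matrix.mul_diagonal, Matrix.transpose_apply]
    by_cases hj : (j : ℕ) < k <;> simp [hj]
  have hdD : d = (Matrix.diagonal fun i : Fin n => if (i : ℕ) < k then (1:ℝ) else 0).mulVec d := by
    have h1 : d = Uᵀ.mulVec (Pk.mulVec x) := by rw [hx]
    rw [hPk', Matrix.mulVec_mulVec, ← Matrix.mul_assoc, ← Matrix.mul_assoc, hU,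
      Matrix.one_mul, ← Matrix.mulVec_mulVec] at h1
    exact h1
  have hdsupp : ∀ i : Fin n, ¬((i : ℕ) < k) → d i = 0 := by
    intro i hi
    have := congrFun hdD i
    rw [Matrix.mulVec_diagonal, if_neg hi, zero_mul] at this
    exact this
  -- y = e + d
  have heyd : e = y - d := by rw [he, hy, hd, Matrix.mulVec_sub]
  -- main quadratic form identity
  have e1 : Lt.mulVec (A.mulVec x) = A.mulVec (gL.mulVec (P.mulVec x)) := by
    rw [hLt, hPdef]
    simp only [Matrix.mulVec_mulVec, Matrix.mul_assoc]
  have e2 : A.mulVec x ⬝ᵥ A.mulVec (gL.mulVec (P.mulVec x))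
      = P.mulVec x ⬝ᵥ gL.mulVec (P.mulVec x) := by
    rw [hdot A, Matrix.mulVec_mulVec, ← hPdef, hdot P, hPsymm, Matrix.mulVec_mulVec]
  have e3 : P.mulVec x ⬝ᵥ gL.mulVec (P.mulVec x)
      = ∑ i, g.eval (lam i) * (y i * y i) := by
    rw [hgL]
    have h4 : (U * Matrix.diagonal (fun i => g.eval (lam i)) * Uᵀ).mulVec (P.mulVec x)
        = U.mulVec ((Matrix.diagonal (fun i => g.eval (lam i))).mulVec y) := by
      rw [hy]
      simp only [Matrix.mulVec_mulVec, Matrix.mul_assoc]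
    rw [h4, Matrix.dotProduct_mulVec, ← Matrix.mulVec_transpose, ← hy]
    simp only [dotProduct, Matrix.mulVec_diagonal]
    exact Finset.sum_congr rfl fun i _ => by ring
  have hyy : y ⬝ᵥ y ≤ x ⬝ᵥ x := by
    rw [hy, hUn]
    exact hcontr
  have hee : e ⬝ᵥ e ≤ ε ^ 2 * (x ⬝ᵥ x) := by
    rw [he, hUn]
    exact hex
  -- final assembly
  have hmain : A.mulVec x ⬝ᵥ Lt.mulVec (A.mulVec x) = ∑ i, g.eval (lam i) * (y i * y i) := by
    rw [e1, e2, e3]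
  rw [hmain]
  set gk := g.eval (lam ⟨k - 1, lt_of_lt_of_le (Nat.sub_lt hk0 one_pos) hkn⟩) with hgk
  set gn := g.eval (lam ⟨n - 1, Nat.sub_lt (lt_of_lt_of_le hk0 hkn) one_pos⟩) with hgn
  have hsplit := (Finset.sum_filter_add_sum_filter_not Finset.univ
    (fun i : Fin n => (i : ℕ) < k) (fun i => g.eval (lam i) * (y i * y i))).symm
  rw [hsplit]
  have h1 : (∑ i ∈ Finset.univ.filter fun i : Fin n => (i : ℕ) < k,
      g.eval (lam i) * (y i * y i)) ≤ gk * (x ⬝ᵥ x) := by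
    calc (∑ i ∈ Finset.univ.filter fun i : Fin n => (i : ℕ) < k,
          g.eval (lam i) * (y i * y i))
        ≤ ∑ i ∈ Finset.univ.filter fun i : Fin n => (i : ℕ) < k, gk * (y i * y i) := by
          refine Finset.sum_le_sum fun i hi => ?_
          have hik : (i : ℕ) < k := (Finset.mem_filter.mp hi).2
          refine mul_le_mul_of_nonneg_right (hgmono _ _ (hmono ?_)) (mul_self_nonneg _)
          rw [Fin.le_def]
          simp only
          omega
      _ ≤ ∑ i, gk * (y i * y i) := by
          refine Finset.sum_le_sum_of_subset_of_nonneg (Finset.filter_subset _ _)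
            fun i _ _ => mul_nonneg (hg0 _) (mul_self_nonneg _)
      _ = gk * (y ⬝ᵥ y) := by rw [← Finset.mul_sum]; rfl
      _ ≤ gk * (x ⬝ᵥ x) := mul_le_mul_of_nonneg_left hyy (hg0 _)
  have h2 : (∑ i ∈ Finset.univ.filter fun i : Fin n => ¬(i : ℕ) < k,
      g.eval (lam i) * (y i * y i)) ≤ ε ^ 2 * gn * (x ⬝ᵥ x) := by
    calc (∑ i ∈ Finset.univ.filter fun i : Fin n => ¬(i : ℕ) < k,
          g.eval (lam i) * (y i * y i))
        ≤ ∑ i ∈ Finset.univ.filter fun i : Fin n => ¬(i : ℕ) < k, gn * (e i * e i) := by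
          refine Finset.sum_le_sum fun i hi => ?_
          have hik : ¬(i : ℕ) < k := (Finset.mem_filter.mp hi).2
          have hye : y i = e i := by
            rw [heyd]
            simp [hdsupp i hik]
          rw [hye]
          refine mul_le_mul_of_nonneg_right (hgmono _ _ (hmono ?_)) (mul_self_nonneg _)
          rw [Fin.le_def]
          simp only
          have := i.isLt
          omega
      _ ≤ ∑ i, gn * (e i * e i) := by
          refine Finset.sum_le_sum_of_subset_of_nonneg (Finset.filter_subset _ _)
            fun i _ _ => mul_nonneg (hg0 _) (mul_self_nonneg _)
      _ = gn * (e ⬝ᵥ e) := by rw [← Finset.mul_sum]; rfl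
      _ ≤ gn * (ε ^ 2 * (x ⬝ᵥ x)) := mul_le_mul_of_nonneg_left hee (hg0 _)
      _ = ε ^ 2 * gn * (x ⬝ᵥ x) := by ring
  exact add_le_add h1 h2
end

section
/- Let B ∈ ℝ^{m×n} with ‖B‖₂ ≤ M_max, let U_k ∈ ℝ^{n×k} have orthonormal columns, and suppose the RIP (1−δ)‖x‖₂² ≤ s^{-1}‖Bx‖₂² holds for all x ∈ span(U_k), with 0 < δ < 1. Let x ∈ span(U_k) with ‖Q x − x‖₂ ≤ ε‖x‖₂ where Q is an orthogonal projection matrix (Q = QᵀQ = Q²). Let v ∈ ℝ^n be arbitrary and write v = α + β with α = U_kU_kᵀ v and β = (I − U_kU_kᵀ) v. Then ‖B v − B Q x‖₂ ≥ √(s(1−δ))·‖α − x‖₂ − M_max‖β‖₂ − ε·M_max·‖x‖₂. -/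
open Matrix Finset

/-- Spectral (ℓ2 operator) norm of a real matrix. -/
noncomputable def specNorm {m n : ℕ} (A : Matrix (Fin m) (Fin n) ℝ) : ℝ :=
  ‖LinearMap.toContinuousLinearMap (Matrix.toEuclideanLin A)‖

/-!
Write `α = U Uᵀ v`. Both `α` and `x` lie in the range of `U`, so the RIP bounds
`‖B (α - x)‖` from below by `√(s (1 - δ)) ‖α - x‖`. On the other hand, going from `Bα` to `Bx`
through `Bv` and `BQx`, the triangle inequality bounds it from above by
`‖Bv - BQx‖ + M ‖v - α‖ + M ‖Qx - x‖`, and the last term is at most `ε M ‖x‖`.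
-/

section vnorm

variable {ι : Type*} [Fintype ι]

lemma vnorm_eq_norm_toLp (v : ι → ℝ) : vnorm v = ‖WithLp.toLp 2 v‖ := by
  simp only [vnorm, EuclideanSpace.norm_eq, Real.norm_eq_abs, sq_abs]

lemma vnorm_sq_eq_dotProduct (v : ι → ℝ) : vnorm v ^ 2 = v ⬝ᵥ v := by
  rw [vnorm, Real.sq_sqrt (by positivity)]
  simp only [dotProduct, sq]

lemma vnorm_sub_comm (a b : ι → ℝ) : vnorm (a - b) = vnorm (b - a) := by
  simp only [vnorm_eq_norm_toLp, WithLp.toLp_sub, norm_sub_rev]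

lemma vnorm_sub_le_vnorm_sub_add_vnorm_sub (a b c : ι → ℝ) :
    vnorm (a - c) ≤ vnorm (a - b) + vnorm (b - c) := by
  simp only [vnorm_eq_norm_toLp, WithLp.toLp_sub]
  exact norm_sub_le_norm_sub_add_norm_sub _ _ _

end vnorm

lemma vnorm_mulVec_le_of_specNorm_le {m n : ℕ} {A : Matrix (Fin m) (Fin n) ℝ} {M : ℝ}
    (hA : specNorm A ≤ M) (v : Fin n → ℝ) : vnorm (A *ᵥ v) ≤ M * vnorm v := by
  have hop : vnorm (A *ᵥ v) ≤ specNorm A * vnorm v := by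
    rw [vnorm_eq_norm_toLp, vnorm_eq_norm_toLp]
    exact (LinearMap.toContinuousLinearMap (Matrix.toEuclideanLin A)).le_opNorm (WithLp.toLp 2 v)
  exact hop.trans (mul_le_mul_of_nonneg_right hA (Real.sqrt_nonneg _))

-- No sign condition on `a` is needed: when `s * a < 0` the square root is `0`.
lemma sqrt_mul_mul_le_of_mul_sq_le {s a p q : ℝ} (hs : 0 < s) (hp : 0 ≤ p) (hq : 0 ≤ q)
    (h : a * p ^ 2 ≤ s⁻¹ * q ^ 2) : √(s * a) * p ≤ q := by
  have hsq : s * a * p ^ 2 ≤ q ^ 2 := by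
    rw [mul_assoc]
    calc s * (a * p ^ 2) ≤ s * (s⁻¹ * q ^ 2) := mul_le_mul_of_nonneg_left h hs.le
      _ = q ^ 2 := by rw [← mul_assoc, mul_inv_cancel₀ hs.ne', one_mul]
  calc √(s * a) * p = √(s * a * p ^ 2) := by rw [Real.sqrt_mul' _ (sq_nonneg p), Real.sqrt_sq hp]
    _ ≤ √(q ^ 2) := Real.sqrt_le_sqrt hsq
    _ = q := Real.sqrt_sq hq

theorem stmt18_general {m n k : ℕ} (B : Matrix (Fin m) (Fin n) ℝ)
    (Uk : Matrix (Fin n) (Fin k) ℝ)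
    (Mmax s δ ε : ℝ) (hs : 0 < s)
    (hB : specNorm B ≤ Mmax)
    (hRIP : ∀ x : Fin n → ℝ, (∃ c : Fin k → ℝ, x = Uk.mulVec c) →
      (1 - δ) * (x ⬝ᵥ x) ≤ s⁻¹ * (B.mulVec x ⬝ᵥ B.mulVec x))
    (Q : Matrix (Fin n) (Fin n) ℝ)
    (x : Fin n → ℝ) (hx : ∃ c : Fin k → ℝ, x = Uk.mulVec c)
    (hxc : vnorm (Q.mulVec x - x) ≤ ε * vnorm x)
    (v : Fin n → ℝ) :
    Real.sqrt (s * (1 - δ)) * vnorm ((Uk * Ukᵀ).mulVec v - x)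
        - Mmax * vnorm (v - (Uk * Ukᵀ).mulVec v) - ε * Mmax * vnorm x
      ≤ vnorm (B.mulVec v - B.mulVec (Q.mulVec x)) := by
  set α := (Uk * Ukᵀ) *ᵥ v
  obtain ⟨c, hc⟩ := hx
  have hrange : α - x = Uk *ᵥ (Ukᵀ *ᵥ v - c) := by
    rw [hc, mulVec_sub, mulVec_mulVec]
  have hlower : √(s * (1 - δ)) * vnorm (α - x) ≤ vnorm (B *ᵥ α - B *ᵥ x) := by
    rw [← mulVec_sub]
    refine sqrt_mul_mul_le_of_mul_sq_le hs (Real.sqrt_nonneg _) (Real.sqrt_nonneg _) ?_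
    simpa only [vnorm_sq_eq_dotProduct] using hRIP _ ⟨_, hrange⟩
  have hupper : vnorm (B *ᵥ α - B *ᵥ x)
      ≤ vnorm (B *ᵥ α - B *ᵥ v) + vnorm (B *ᵥ v - B *ᵥ Q *ᵥ x) + vnorm (B *ᵥ Q *ᵥ x - B *ᵥ x) :=
    (vnorm_sub_le_vnorm_sub_add_vnorm_sub _ (B *ᵥ Q *ᵥ x) _).trans
      (add_le_add_left (vnorm_sub_le_vnorm_sub_add_vnorm_sub _ _ _) _)
  have hproj : vnorm (B *ᵥ α - B *ᵥ v) ≤ Mmax * vnorm (v - α) := by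
    rw [vnorm_sub_comm, ← mulVec_sub]
    exact vnorm_mulVec_le_of_specNorm_le hB _
  have happrox : vnorm (B *ᵥ Q *ᵥ x - B *ᵥ x) ≤ ε * Mmax * vnorm x := by
    have hM : 0 ≤ Mmax := (norm_nonneg _).trans hB
    calc vnorm (B *ᵥ Q *ᵥ x - B *ᵥ x) ≤ Mmax * vnorm (Q *ᵥ x - x) := by
          rw [← mulVec_sub]; exact vnorm_mulVec_le_of_specNorm_le hB _
      _ ≤ Mmax * (ε * vnorm x) := mul_le_mul_of_nonneg_left hxc hM
      _ = ε * Mmax * vnorm x := by ring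
  linarith

theorem stmt18 {m n k : ℕ} (B : Matrix (Fin m) (Fin n) ℝ)
    (Uk : Matrix (Fin n) (Fin k) ℝ) (hUk : Ukᵀ * Uk = 1)
    (Mmax s δ ε : ℝ) (hδ0 : 0 < δ) (hδ1 : δ < 1) (hs : 0 < s) (hε : 0 ≤ ε)
    (hB : specNorm B ≤ Mmax)
    (hRIP : ∀ x : Fin n → ℝ, (∃ c : Fin k → ℝ, x = Uk.mulVec c) →
      (1 - δ) * (x ⬝ᵥ x) ≤ s⁻¹ * (B.mulVec x ⬝ᵥ B.mulVec x))
    (Q : Matrix (Fin n) (Fin n) ℝ) (hQsym : Qᵀ = Q) (hQproj : Q * Q = Q)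
    (x : Fin n → ℝ) (hx : ∃ c : Fin k → ℝ, x = Uk.mulVec c)
    (hxc : vnorm (Q.mulVec x - x) ≤ ε * vnorm x)
    (v : Fin n → ℝ) :
    Real.sqrt (s * (1 - δ)) * vnorm ((Uk * Ukᵀ).mulVec v - x)
        - Mmax * vnorm (v - (Uk * Ukᵀ).mulVec v) - ε * Mmax * vnorm x
      ≤ vnorm (B.mulVec v - B.mulVec (Q.mulVec x)) :=
  stmt18_general B Uk Mmax s δ ε hs hB hRIP Q x hx hxc v
end
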